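/- For all sufficiently large integers k, b = k/((k+1)(2k+1)) satisfies the fixed-point equation ( (⌊1/(2b)⌋ - k)(3k - ⌊1/(2b)⌋ + 1) + (⌊1/(2b)⌋ - k + 1)(3k - ⌊1/(2b)⌋ + 2) ) / (2(2k+1)(2k+2)) = (1 - 2kb)/2. -/

import Mathlib

/-!
For `k ≥ 2` we have `1 / (2b) = k + 3/2 + 1/(2k)`, whose integer part is `k + 1`; with this
value of the floor both sides equal `(3k + 1) / (2 (k + 1) (2k + 1))`.
-/

lemma one_div_two_mul_div_eq {k : ℝ} (hk : 0 < k) :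
    1 / (2 * (k / ((k + 1) * (2 * k + 1)))) = k + 3 / 2 + 1 / (2 * k) := by
  field_simp
  ring

lemma floor_one_div_two_mul_div_eq {k : ℕ} (hk : 2 ≤ k) :
    ⌊1 / (2 * ((k : ℝ) / (((k : ℝ) + 1) * (2 * k + 1))))⌋ = k + 1 := by
  have hk' : (2 : ℝ) ≤ k := by exact_mod_cast hk
  have hinv : 1 / (2 * (k : ℝ)) ≤ 1 / 4 := by
    rw [div_le_div_iff₀ (by positivity) (by norm_num)]; linarith
  rw [one_div_two_mul_div_eq (by positivity), Int.floor_eq_iff]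
  push_cast
  constructor <;> linarith [show (0 : ℝ) ≤ 1 / (2 * k) by positivity]

theorem stmt_18 :
    ∃ K : ℕ, ∀ k : ℕ, K ≤ k → ∀ b : ℝ, b = (k : ℝ) / (((k : ℝ) + 1) * (2 * k + 1)) →
      (((⌊1 / (2 * b)⌋ : ℝ) - k) * (3 * k - (⌊1 / (2 * b)⌋ : ℝ) + 1) +
        ((⌊1 / (2 * b)⌋ : ℝ) - k + 1) * (3 * k - (⌊1 / (2 * b)⌋ : ℝ) + 2)) /
          (2 * (2 * (k : ℝ) + 1) * (2 * k + 2)) = (1 - 2 * k * b) / 2 := by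
  refine ⟨2, fun k hk b hb => ?_⟩
  subst hb
  rw [floor_one_div_two_mul_div_eq hk]
  push_cast
  field_simp
  ring
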